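/- The functions β_k(t) = (1/k)(1 − e^{−t})^{k−1}((k+1)e^{−t} − 1), for k ≥ 1, satisfy the system of differential equations dβ_k/dt = −δ_{k1} − k β_k(t) + (k−1) β_{k−1}(t) with initial conditions β_k(0) = δ_{k1} (where β_0 is interpreted as 0 and δ_{k1} = 1 if k = 1, else 0). -/

import Mathlib

open Real

-- Since `1 / 0 = 0` in `ℝ`, `treeDensity 0 = 0`.
noncomputable def treeDensity (k : ℕ) (t : ℝ) : ℝ :=
  (1 / (k : ℝ)) * (1 - exp (-t)) ^ (k - 1) * (((k : ℝ) + 1) * exp (-t) - 1)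

theorem treeDensity_zero_right (k : ℕ) : treeDensity k 0 = if k = 1 then 1 else 0 := by
  rcases Nat.lt_trichotomy k 1 with hk | rfl | hk
  · obtain rfl : k = 0 := by omega
    simp [treeDensity]
  · norm_num [treeDensity]
  · simp [treeDensity, hk.ne', zero_pow (show k - 1 ≠ 0 by omega)]

theorem hasDerivAt_treeDensity {k : ℕ} (hk : 1 ≤ k) (t : ℝ) :
    HasDerivAt (treeDensity k)
      (-(if k = 1 then (1 : ℝ) else 0) - (k : ℝ) * treeDensity k t
        + ((k : ℝ) - 1) * treeDensity (k - 1) t) t := by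
  obtain ⟨n, rfl⟩ : ∃ n, k = n + 1 := ⟨k - 1, by omega⟩
  have hexp : HasDerivAt (fun s : ℝ => exp (-s)) (-exp (-t)) t := by
    simpa using (hasDerivAt_neg t).exp
  have hfactor : HasDerivAt (fun s : ℝ => (1 - exp (-s)) ^ n)
      (n * (1 - exp (-t)) ^ (n - 1) * exp (-t)) t := by
    simpa using (hexp.const_sub 1).fun_pow n
  have hlinear : HasDerivAt (fun s : ℝ => ((n + 1 : ℕ) + 1 : ℝ) * exp (-s) - 1)
      (((n + 1 : ℕ) + 1 : ℝ) * -exp (-t)) t :=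
    (hexp.const_mul _).sub_const 1
  refine ((hfactor.const_mul (1 / ((n + 1 : ℕ) : ℝ))).mul hlinear).congr_deriv ?_
  rcases n with _ | m
  · norm_num [treeDensity]
    ring
  · simp only [treeDensity, Nat.add_sub_cancel, pow_succ]
    push_cast
    field_simp
    ring

theorem stmt_13_general (β : ℕ → ℝ → ℝ)
    (hβ : ∀ k : ℕ, 1 ≤ k → ∀ t : ℝ,
      β k t = (1 / (k : ℝ)) * (1 - Real.exp (-t)) ^ (k - 1) *
        (((k : ℝ) + 1) * Real.exp (-t) - 1)) :
    ∀ k : ℕ, 1 ≤ k →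
      (∀ t : ℝ, HasDerivAt (fun s => β k s)
        (-(if k = 1 then (1 : ℝ) else 0) - (k : ℝ) * β k t + ((k : ℝ) - 1) * β (k - 1) t) t) ∧
      β k 0 = (if k = 1 then (1 : ℝ) else 0) := by
  intro k hk
  have hβk : β k = treeDensity k := funext (hβ k hk)
  have hβpred (t : ℝ) : ((k : ℝ) - 1) * β (k - 1) t = ((k : ℝ) - 1) * treeDensity (k - 1) t := by
    rcases eq_or_lt_of_le hk with rfl | hk2
    · simp
    · rw [hβ (k - 1) (by omega) t, treeDensity]
  refine ⟨fun t => ?_, ?_⟩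
  · rw [hβpred, hβk]
    exact hasDerivAt_treeDensity hk t
  · rw [hβk, treeDensity_zero_right]

/-- The functions `β_k(t) = (1/k)(1 - e^{-t})^{k-1}((k+1)e^{-t} - 1)`, `k ≥ 1` (with `β₀ = 0`),
satisfy `dβ_k/dt = -δ_{k1} - k β_k(t) + (k-1) β_{k-1}(t)` and `β_k(0) = δ_{k1}`. -/
theorem stmt_13 (β : ℕ → ℝ → ℝ)
    (hβ0 : ∀ t, β 0 t = 0)
    (hβ : ∀ k : ℕ, 1 ≤ k → ∀ t : ℝ,
      β k t = (1 / (k : ℝ)) * (1 - Real.exp (-t)) ^ (k - 1) *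
        (((k : ℝ) + 1) * Real.exp (-t) - 1)) :
    ∀ k : ℕ, 1 ≤ k →
      (∀ t : ℝ, HasDerivAt (fun s => β k s)
        (-(if k = 1 then (1 : ℝ) else 0) - (k : ℝ) * β k t + ((k : ℝ) - 1) * β (k - 1) t) t) ∧
      β k 0 = (if k = 1 then (1 : ℝ) else 0) :=
  stmt_13_general β hβ
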